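/- For every n ≥ 2 there exist constants c(n), C(n) > 0 such that the following holds. Let ℓ₁, ℓ₂ ⊆ ℂⁿ be two complex lines through the origin making angle θ > 0 to each other, i.e. ℓ_j = ℂ·u_j with ‖u_j‖ = 1 and θ = arccos|⟨u₁, u₂⟩|. Then for every δ > 0, the 2n-dimensional Lebesgue measure of ι(N_δ(ℓ₁)) ∩ ι(N_δ(ℓ₂)) satisfies c(n)·δ^{2n}/ sin²θ ≤ |ι(N_δ(ℓ₁)) ∩ ι(N_δ(ℓ₂))| ≤ C(n)·δ^{2n}/ sin²θ, where N_δ denotes the closed δ-neighborhood in ℂⁿ ≅ ℝ^{2n}. -/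

import Mathlib

/-!
Write `s = sin θ` and use coordinates `w = (w₀, …, w_{n-1})` in a unitary frame whose first vector
is `u₁`. The distance from `z` to `ℓ₁` is comparable to `max_{j ≠ 0} |w_j|`, and the point
`w₀ u₁ ∈ ℓ₁` lies at distance exactly `|w₀| s` from `ℓ₂`. By the triangle inequality, `z` is
`δ`-close to both lines if `|w₀| ≲ δ / s` and `|w_j| ≲ δ / n` for `j ≠ 0`, and only if
`|w₀| ≤ 2δ / s` and `|w_j| ≤ δ`. So the intersection is squeezed between two boxes of volume
`≍ (δ / s)² δ^{2n-2}`, and the change of frame is an isometry of `ℝ^{2n}`.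
-/

open MeasureTheory Metric

noncomputable section

/-- `ℂⁿ` with its Euclidean (Hermitian) metric. -/
abbrev Cspace (n : ℕ) := EuclideanSpace ℂ (Fin n)

/-- `ℝ^{2n}`, indexed so that the coordinate `(j, 0)` is the real part of the `j`-th complex
coordinate and `(j, 1)` is its imaginary part. -/
abbrev R2n (n : ℕ) := EuclideanSpace ℝ (Fin n × Fin 2)

/-- The usual embedding `ι : ℂⁿ → ℝ^{2n}`, sending each complex coordinate `z` to
`(Re z, Im z)`. -/
def iotaC {n : ℕ} (x : Cspace n) : R2n n :=
  WithLp.toLp 2 (fun p : Fin n × Fin 2 => if p.2 = 0 then (x p.1).re else (x p.1).im)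

/-- The complex line `ℂ·u` through the origin with direction `u`. -/
def cLine {n : ℕ} (u : Cspace n) : Set (Cspace n) := Set.range fun z : ℂ => z • u

open scoped InnerProductSpace

section Lines

variable {𝕜 E : Type*} [RCLike 𝕜] [NormedAddCommGroup E] [InnerProductSpace 𝕜 E]
  {u u₁ u₂ : E}

variable (𝕜) in
def lineAngle (u₁ u₂ : E) : ℝ :=
  Real.arccos ‖⟪u₁, u₂⟫_𝕜‖

lemma inner_sub_inner_smul_self (hu : ‖u‖ = 1) (z : E) : ⟪u, z - ⟪u, z⟫_𝕜 • u⟫_𝕜 = 0 := by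
  rw [inner_sub_right, inner_smul_right, inner_self_eq_norm_sq_to_K, hu]
  simp

lemma norm_sub_inner_smul_sq (hu : ‖u‖ = 1) (z : E) :
    ‖z - ⟪u, z⟫_𝕜 • u‖ ^ 2 = ‖z‖ ^ 2 - ‖⟪u, z⟫_𝕜‖ ^ 2 := by
  rw [norm_sub_sq (𝕜 := 𝕜), inner_smul_right, ← inner_conj_symm z u, RCLike.mul_conj, norm_smul,
    hu]
  norm_cast
  ring

lemma norm_sub_inner_smul_le (hu : ‖u‖ = 1) (z : E) (c : 𝕜) :
    ‖z - ⟪u, z⟫_𝕜 • u‖ ≤ ‖z - c • u‖ := by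
  have hdecomp : z - c • u = (z - ⟪u, z⟫_𝕜 • u) + (⟪u, z⟫_𝕜 - c) • u := by
    rw [sub_smul]; abel
  have horth : ⟪z - ⟪u, z⟫_𝕜 • u, (⟪u, z⟫_𝕜 - c) • u⟫_𝕜 = 0 := by
    rw [inner_smul_right, ← inner_conj_symm _ u, inner_sub_inner_smul_self hu, map_zero, mul_zero]
  have hpyth := norm_add_sq_eq_norm_sq_add_norm_sq_of_inner_eq_zero _ _ horth
  rw [← hdecomp] at hpyth
  exact nonneg_le_nonneg_of_sq_le_sq (norm_nonneg _)
    (by rw [hpyth]; exact le_add_of_nonneg_right (mul_self_nonneg _))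

lemma mem_cthickening_range_smul_iff (hu : ‖u‖ = 1) {δ : ℝ} (hδ : 0 ≤ δ) {z : E} :
    z ∈ cthickening δ (Set.range fun c : 𝕜 => c • u) ↔ ‖z - ⟪u, z⟫_𝕜 • u‖ ≤ δ := by
  refine ⟨fun hz => ?_,
    fun hz => mem_cthickening_of_dist_le z _ δ _ ⟨_, rfl⟩ (by rwa [dist_eq_norm])⟩
  have hinf :
      ENNReal.ofReal ‖z - ⟪u, z⟫_𝕜 • u‖ ≤ infEDist z (Set.range fun c : 𝕜 => c • u) := by
    refine le_infEDist.2 ?_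
    rintro _ ⟨c, rfl⟩
    rw [edist_dist, dist_eq_norm]
    exact ENNReal.ofReal_le_ofReal (norm_sub_inner_smul_le hu z c)
  exact (ENNReal.ofReal_le_ofReal_iff hδ).1 (hinf.trans (mem_cthickening_iff.1 hz))

lemma norm_smul_sub_inner_smul (hu₁ : ‖u₁‖ = 1) (hu₂ : ‖u₂‖ = 1) (c : 𝕜) :
    ‖c • u₁ - ⟪u₂, c • u₁⟫_𝕜 • u₂‖ = ‖c‖ * Real.sin (lineAngle 𝕜 u₁ u₂) := by
  have hsq := norm_sub_inner_smul_sq (𝕜 := 𝕜) hu₂ u₁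
  rw [hu₁, norm_inner_symm, one_pow] at hsq
  rw [inner_smul_right, ← smul_smul, ← smul_sub, norm_smul, lineAngle, Real.sin_arccos, ← hsq,
    Real.sqrt_sq (norm_nonneg _)]

lemma norm_inner_mul_sin_lineAngle_le (hu₁ : ‖u₁‖ = 1) (hu₂ : ‖u₂‖ = 1) (z : E) :
    ‖⟪u₁, z⟫_𝕜‖ * Real.sin (lineAngle 𝕜 u₁ u₂) ≤ ‖z - ⟪u₁, z⟫_𝕜 • u₁‖ + ‖z - ⟪u₂, z⟫_𝕜 • u₂‖ :=
  calc ‖⟪u₁, z⟫_𝕜‖ * Real.sin (lineAngle 𝕜 u₁ u₂)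
      = ‖⟪u₁, z⟫_𝕜 • u₁ - ⟪u₂, ⟪u₁, z⟫_𝕜 • u₁⟫_𝕜 • u₂‖ :=
        (norm_smul_sub_inner_smul hu₁ hu₂ _).symm
    _ ≤ ‖⟪u₁, z⟫_𝕜 • u₁ - ⟪u₂, z⟫_𝕜 • u₂‖ := norm_sub_inner_smul_le hu₂ _ _
    _ ≤ ‖⟪u₁, z⟫_𝕜 • u₁ - z‖ + ‖z - ⟪u₂, z⟫_𝕜 • u₂‖ :=
        norm_sub_le_norm_sub_add_norm_sub _ _ _
    _ = ‖z - ⟪u₁, z⟫_𝕜 • u₁‖ + ‖z - ⟪u₂, z⟫_𝕜 • u₂‖ := by rw [norm_sub_rev]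

lemma norm_sub_inner_smul_le_add (hu₁ : ‖u₁‖ = 1) (hu₂ : ‖u₂‖ = 1) (z : E) :
    ‖z - ⟪u₂, z⟫_𝕜 • u₂‖ ≤ ‖z - ⟪u₁, z⟫_𝕜 • u₁‖ + ‖⟪u₁, z⟫_𝕜‖ * Real.sin (lineAngle 𝕜 u₁ u₂) :=
  calc ‖z - ⟪u₂, z⟫_𝕜 • u₂‖
      ≤ ‖z - ⟪u₂, ⟪u₁, z⟫_𝕜 • u₁⟫_𝕜 • u₂‖ := norm_sub_inner_smul_le hu₂ _ _
    _ ≤ ‖z - ⟪u₁, z⟫_𝕜 • u₁‖ + ‖⟪u₁, z⟫_𝕜 • u₁ - ⟪u₂, ⟪u₁, z⟫_𝕜 • u₁⟫_𝕜 • u₂‖ :=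
        norm_sub_le_norm_sub_add_norm_sub _ _ _
    _ = ‖z - ⟪u₁, z⟫_𝕜 • u₁‖ + ‖⟪u₁, z⟫_𝕜‖ * Real.sin (lineAngle 𝕜 u₁ u₂) := by
        rw [norm_smul_sub_inner_smul hu₁ hu₂]

lemma sin_lineAngle_pos (h : 0 < lineAngle 𝕜 u₁ u₂) :
    0 < Real.sin (lineAngle 𝕜 u₁ u₂) :=
  Real.sin_pos_of_pos_of_lt_pi h (Real.arccos_lt_pi.2 (by linarith [norm_nonneg ⟪u₁, u₂⟫_𝕜]))

end Lines

namespace OrthonormalBasis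

variable {ι 𝕜 E : Type*} [Fintype ι] [RCLike 𝕜] [NormedAddCommGroup E] [InnerProductSpace 𝕜 E]
  (b : OrthonormalBasis ι 𝕜 E)

lemma inner_sub_inner_smul [DecidableEq ι] (i j : ι) (z : E) :
    ⟪b j, z - ⟪b i, z⟫_𝕜 • b i⟫_𝕜 = if j = i then 0 else ⟪b j, z⟫_𝕜 := by
  split_ifs with h
  · subst h; exact inner_sub_inner_smul_self (b.norm_eq_one j) z
  · rw [inner_sub_right, inner_smul_right, b.inner_eq_ite, if_neg h, mul_zero, sub_zero]

lemma norm_repr_apply_le {i j : ι} (hji : j ≠ i) (z : E) :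
    ‖b.repr z j‖ ≤ ‖z - ⟪b i, z⟫_𝕜 • b i‖ := by
  classical
  calc ‖b.repr z j‖ = ‖⟪b j, z - ⟪b i, z⟫_𝕜 • b i⟫_𝕜‖ := by
        rw [b.inner_sub_inner_smul, if_neg hji, b.repr_apply_apply]
    _ ≤ ‖z - ⟪b i, z⟫_𝕜 • b i‖ := by
        simpa [b.norm_eq_one] using norm_inner_le_norm (𝕜 := 𝕜) (b j) (z - ⟪b i, z⟫_𝕜 • b i)

lemma norm_sub_inner_smul_le_card_mul {i : ι} {z : E} {ε : ℝ} (hε : 0 ≤ ε)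
    (h : ∀ j ≠ i, ‖b.repr z j‖ ≤ ε) : ‖z - ⟪b i, z⟫_𝕜 • b i‖ ≤ Fintype.card ι * ε := by
  classical
  have hcoord : ∀ j, ‖⟪b j, z - ⟪b i, z⟫_𝕜 • b i⟫_𝕜‖ ≤ ε := fun j => by
    rw [b.inner_sub_inner_smul]
    split_ifs with hji
    · simpa using hε
    · rw [← b.repr_apply_apply]; exact h j hji
  calc ‖z - ⟪b i, z⟫_𝕜 • b i‖
      = ‖∑ j, ⟪b j, z - ⟪b i, z⟫_𝕜 • b i⟫_𝕜 • b j‖ := by rw [b.sum_repr']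
    _ ≤ ∑ j, ‖⟪b j, z - ⟪b i, z⟫_𝕜 • b i⟫_𝕜‖ := by
        refine (norm_sum_le _ _).trans (Finset.sum_le_sum fun j _ => ?_)
        rw [norm_smul, b.norm_eq_one, mul_one]
    _ ≤ Fintype.card ι * ε := by
        refine (Finset.sum_le_card_nsmul _ _ _ fun j _ => hcoord j).trans_eq ?_
        rw [nsmul_eq_mul, Finset.card_univ]

end OrthonormalBasis

lemma exists_orthonormalBasis_apply_eq {ι 𝕜 E : Type*} [Fintype ι] [RCLike 𝕜]
    [NormedAddCommGroup E] [InnerProductSpace 𝕜 E] [FiniteDimensional 𝕜 E]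
    (hcard : Module.finrank 𝕜 E = Fintype.card ι) (i : ι) {u : E} (hu : ‖u‖ = 1) :
    ∃ b : OrthonormalBasis ι 𝕜 E, b i = u := by
  classical
  have hon : Orthonormal 𝕜 (({i} : Set ι).domRestrict fun _ => u) := by
    rw [orthonormal_iff_ite]
    rintro ⟨j, rfl⟩ ⟨k, rfl⟩
    simp [inner_self_eq_norm_sq_to_K, hu]
  obtain ⟨b, hb⟩ := hon.exists_orthonormalBasis_extension_of_card_eq hcard
  exact ⟨b, hb i rfl⟩

section Embedding

variable {n : ℕ}

def iotaLinearIsometryEquiv (n : ℕ) : Cspace n ≃ₗᵢ[ℝ] R2n n where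
  toFun := iotaC
  invFun y := WithLp.toLp 2 fun j => ⟨y (j, 0), y (j, 1)⟩
  map_add' x y := by ext ⟨j, k⟩; fin_cases k <;> simp [iotaC]
  map_smul' c x := by ext ⟨j, k⟩; fin_cases k <;> simp [iotaC]
  left_inv x := by ext j; simp [iotaC]
  right_inv y := by ext ⟨j, k⟩; fin_cases k <;> simp [iotaC]
  norm_map' x := by
    simp only [LinearEquiv.coe_mk, LinearMap.coe_mk, AddHom.coe_mk, EuclideanSpace.norm_eq,
      Fintype.sum_prod_type, Fin.sum_univ_two, iotaC, Fin.isValue, ↓reduceIte, one_ne_zero]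
    congr 1
    refine Finset.sum_congr rfl fun j _ => ?_
    rw [Real.norm_eq_abs, Real.norm_eq_abs, sq_abs, sq_abs, ← Complex.normSq_add_mul_I,
      Complex.re_add_im, Complex.normSq_eq_norm_sq]

@[simp] lemma coe_iotaLinearIsometryEquiv : ⇑(iotaLinearIsometryEquiv n) = iotaC := rfl

lemma iotaC_injective : Function.Injective (iotaC (n := n)) := (iotaLinearIsometryEquiv n).injective

lemma volume_image_iotaC_preimage (e : Cspace n ≃ₗᵢ[ℂ] Cspace n) (Y : Set (R2n n)) :
    volume (iotaC '' (e ⁻¹' (iotaC ⁻¹' Y))) = volume Y := by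
  let eℝ : Cspace n ≃ₗᵢ[ℝ] Cspace n :=
    { e.toLinearEquiv.restrictScalars ℝ with norm_map' := e.norm_map }
  let g := (iotaLinearIsometryEquiv n).symm.trans (eℝ.trans (iotaLinearIsometryEquiv n))
  have hg : iotaC '' (e ⁻¹' (iotaC ⁻¹' Y)) = g.toMeasurableEquiv ⁻¹' Y := by
    rw [← coe_iotaLinearIsometryEquiv, LinearIsometryEquiv.image_eq_preimage_symm]
    rfl
  rw [hg, g.measurePreserving.measure_preimage_equiv]

def realBox (R : Fin n → ℝ) : Set (R2n n) := {y | ∀ p, |y p| ≤ R p.1}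

lemma volume_realBox {R : Fin n → ℝ} (hR : ∀ j, 0 ≤ R j) :
    volume (realBox R) = ENNReal.ofReal (∏ j, (2 * R j) ^ 2) := by
  have hbox : realBox R = WithLp.ofLp ⁻¹' Set.univ.pi fun p => Set.Icc (-R p.1) (R p.1) := by
    ext y; simp [realBox, abs_le, Pi.le_def, Prod.forall, forall_and]
  rw [hbox, (PiLp.volume_preserving_ofLp _).measure_preimage
      (MeasurableSet.univ_pi fun _ => measurableSet_Icc).nullMeasurableSet,
    volume_pi_pi, ENNReal.ofReal_prod_of_nonneg fun j _ => sq_nonneg _, Fintype.prod_prod_type]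
  refine Finset.prod_congr rfl fun j _ => ?_
  rw [Fin.prod_univ_two, Real.volume_Icc, ← ENNReal.ofReal_mul (by linarith [hR j])]
  congr 1; ring

lemma iotaC_mem_realBox_of_norm_le {R : Fin n → ℝ} {w : Cspace n} (h : ∀ j, ‖w j‖ ≤ R j) :
    iotaC w ∈ realBox R := by
  rintro ⟨j, k⟩
  fin_cases k
  · exact (Complex.abs_re_le_norm _).trans (h j)
  · exact (Complex.abs_im_le_norm _).trans (h j)

lemma norm_le_of_iotaC_mem_realBox {R : Fin n → ℝ} {w : Cspace n} (h : iotaC w ∈ realBox R)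
    (j : Fin n) : ‖w j‖ ≤ 2 * R j := by
  have hre : |(w j).re| ≤ R j := h (j, 0)
  have him : |(w j).im| ≤ R j := h (j, 1)
  linarith [Complex.norm_le_abs_re_add_abs_im (w j)]

end Embedding

section TwoLines

variable {m : ℕ} (b : OrthonormalBasis (Fin (m + 1)) ℂ (Cspace (m + 1))) {u₂ : Cspace (m + 1)}
  {δ : ℝ}

lemma inter_cthickening_subset_preimage_realBox (hu₂ : ‖u₂‖ = 1)
    (hs : 0 < Real.sin (lineAngle ℂ (b 0) u₂)) (hδ : 0 ≤ δ) :
    cthickening δ (cLine (b 0)) ∩ cthickening δ (cLine u₂) ⊆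
      b.repr ⁻¹' (iotaC ⁻¹'
        realBox fun j => if j = 0 then 2 * δ / Real.sin (lineAngle ℂ (b 0) u₂) else δ) := by
  rintro z ⟨h₁, h₂⟩
  rw [cLine, mem_cthickening_range_smul_iff (b.norm_eq_one 0) hδ] at h₁
  rw [cLine, mem_cthickening_range_smul_iff hu₂ hδ] at h₂
  rw [Set.mem_preimage, Set.mem_preimage]
  refine iotaC_mem_realBox_of_norm_le fun j => ?_
  split_ifs with hj
  · subst hj
    rw [b.repr_apply_apply, le_div_iff₀ hs]
    linarith [norm_inner_mul_sin_lineAngle_le (𝕜 := ℂ) (b.norm_eq_one 0) hu₂ z]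
  · exact (b.norm_repr_apply_le hj z).trans h₁

lemma preimage_realBox_subset_inter_cthickening (hu₂ : ‖u₂‖ = 1)
    (hs : 0 < Real.sin (lineAngle ℂ (b 0) u₂)) (hδ : 0 ≤ δ) :
    b.repr ⁻¹' (iotaC ⁻¹' realBox fun j =>
        if j = 0 then δ / (4 * Real.sin (lineAngle ℂ (b 0) u₂)) else δ / (4 * (m + 1))) ⊆
      cthickening δ (cLine (b 0)) ∩ cthickening δ (cLine u₂) := by
  intro z hz
  rw [Set.mem_preimage, Set.mem_preimage] at hz
  have hw := norm_le_of_iotaC_mem_realBox hz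
  have h₀ : ‖⟪b 0, z⟫_ℂ‖ * Real.sin (lineAngle ℂ (b 0) u₂) ≤ δ / 2 := by
    have := hw 0
    rw [if_pos rfl, b.repr_apply_apply] at this
    calc _ ≤ 2 * (δ / (4 * Real.sin (lineAngle ℂ (b 0) u₂))) *
            Real.sin (lineAngle ℂ (b 0) u₂) := mul_le_mul_of_nonneg_right this hs.le
      _ = δ / 2 := by field_simp; ring
  have h₁ : ‖z - ⟪b 0, z⟫_ℂ • b 0‖ ≤ δ / 2 := by
    refine (b.norm_sub_inner_smul_le_card_mul (ε := 2 * (δ / (4 * (m + 1)))) (by positivity)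
      fun j hj => by simpa [hj] using hw j).trans_eq ?_
    rw [Fintype.card_fin]; push_cast; field_simp; ring
  constructor
  · rw [cLine, mem_cthickening_range_smul_iff (b.norm_eq_one 0) hδ]
    linarith
  · rw [cLine, mem_cthickening_range_smul_iff hu₂ hδ]
    linarith [norm_sub_inner_smul_le_add (𝕜 := ℂ) (b.norm_eq_one 0) hu₂ z]

lemma volume_iotaC_inter_le (hu₂ : ‖u₂‖ = 1) (hs : 0 < Real.sin (lineAngle ℂ (b 0) u₂))
    (hδ : 0 ≤ δ) :
    volume (iotaC '' cthickening δ (cLine (b 0)) ∩ iotaC '' cthickening δ (cLine u₂)) ≤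
      ENNReal.ofReal (4 ^ (m + 2) * δ ^ (2 * (m + 1)) / Real.sin (lineAngle ℂ (b 0) u₂) ^ 2) := by
  rw [← Set.image_inter iotaC_injective]
  calc _ ≤ _ :=
        measure_mono (Set.image_mono (inter_cthickening_subset_preimage_realBox b hu₂ hs hδ))
    _ = _ := volume_image_iotaC_preimage _ _
    _ = _ := by
      rw [volume_realBox fun j => by split_ifs <;> positivity]
      congr 1
      simp only [Fin.prod_univ_succ, if_pos, Fin.succ_ne_zero, if_false, Finset.prod_const,
        Finset.card_univ, Fintype.card_fin]
      field_simp
      ring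

lemma le_volume_iotaC_inter (hu₂ : ‖u₂‖ = 1) (hs : 0 < Real.sin (lineAngle ℂ (b 0) u₂))
    (hδ : 0 ≤ δ) :
    ENNReal.ofReal (1 / (4 * (2 * ((m : ℝ) + 1)) ^ (2 * m)) * δ ^ (2 * (m + 1)) /
        Real.sin (lineAngle ℂ (b 0) u₂) ^ 2) ≤
      volume (iotaC '' cthickening δ (cLine (b 0)) ∩ iotaC '' cthickening δ (cLine u₂)) := by
  rw [← Set.image_inter iotaC_injective]
  calc _ = _ := by
        rw [volume_realBox fun j => by split_ifs <;> positivity]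
        congr 1
        simp only [Fin.prod_univ_succ, if_pos, Fin.succ_ne_zero, if_false, Finset.prod_const,
          Finset.card_univ, Fintype.card_fin]
        rw [show (2 * (δ / (4 * ((m : ℝ) + 1)))) ^ 2 = δ ^ 2 / (2 * ((m : ℝ) + 1)) ^ 2 by
            field_simp; ring, div_pow, ← pow_mul, ← pow_mul]
        field_simp
        ring
    _ = _ := (volume_image_iotaC_preimage b.repr _).symm
    _ ≤ _ :=
        measure_mono (Set.image_mono (preimage_realBox_subset_inter_cthickening b hu₂ hs hδ))

end TwoLines

theorem statement5_general (n : ℕ) :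
    ∃ c C : ℝ, 0 < c ∧ 0 < C ∧
      ∀ u₁ u₂ : Cspace n, ‖u₁‖ = 1 → ‖u₂‖ = 1 →
      ∀ θ : ℝ, θ = Real.arccos ‖(inner ℂ u₁ u₂ : ℂ)‖ → 0 < θ →
      ∀ δ : ℝ, 0 < δ →
        ENNReal.ofReal (c * δ ^ (2 * n) / Real.sin θ ^ 2) ≤
            volume (iotaC '' cthickening δ (cLine u₁) ∩ iotaC '' cthickening δ (cLine u₂)) ∧
        volume (iotaC '' cthickening δ (cLine u₁) ∩ iotaC '' cthickening δ (cLine u₂)) ≤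
            ENNReal.ofReal (C * δ ^ (2 * n) / Real.sin θ ^ 2) := by
  rcases n with _ | m
  · exact ⟨1, 1, one_pos, one_pos, fun u₁ _ hu₁ => by simp [Subsingleton.elim u₁ 0] at hu₁⟩
  refine ⟨1 / (4 * (2 * ((m : ℝ) + 1)) ^ (2 * m)), 4 ^ (m + 2), by positivity, by positivity, ?_⟩
  rintro u₁ u₂ hu₁ hu₂ θ rfl hθ δ hδ
  obtain ⟨b, rfl⟩ := exists_orthonormalBasis_apply_eq (𝕜 := ℂ) (by simp) (0 : Fin (m + 1)) hu₁
  have hs : 0 < Real.sin (lineAngle ℂ (b 0) u₂) := sin_lineAngle_pos hθ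
  exact ⟨le_volume_iotaC_inter b hu₂ hs hδ.le, volume_iotaC_inter_le b hu₂ hs hδ.le⟩

/-- volume of the intersection of the `δ`-neighbourhoods of two complex
lines through the origin in `ℂⁿ`, embedded in `ℝ^{2n}`. -/
theorem statement5 (n : ℕ) (hn : 2 ≤ n) :
    ∃ c C : ℝ, 0 < c ∧ 0 < C ∧
      ∀ u₁ u₂ : Cspace n, ‖u₁‖ = 1 → ‖u₂‖ = 1 →
      ∀ θ : ℝ, θ = Real.arccos ‖(inner ℂ u₁ u₂ : ℂ)‖ → 0 < θ →
      ∀ δ : ℝ, 0 < δ →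
        ENNReal.ofReal (c * δ ^ (2 * n) / Real.sin θ ^ 2) ≤
            volume (iotaC '' cthickening δ (cLine u₁) ∩ iotaC '' cthickening δ (cLine u₂)) ∧
        volume (iotaC '' cthickening δ (cLine u₁) ∩ iotaC '' cthickening δ (cLine u₂)) ≤
            ENNReal.ofReal (C * δ ^ (2 * n) / Real.sin θ ^ 2) :=
  statement5_general n
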